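/- Let x be a tropical Plücker vector of rank d on [n] and let D be the regular subdivision of the hypersimplex Δ(d,n) induced by lifting e_I to x_I. Then every edge of D is an edge of Δ(d,n); i.e., every internal edge [e_I, e_J] of a regular subdivision of Δ(d,n) with I ≠ J, |I∖J| ≥ 2, is forbidden by the three-term tropical Plücker relations. -/

import Mathlib

open Finset

/-- The 0/1 indicator vector `e_I ∈ ℝⁿ` of a subset `I ⊆ [n]`. -/
def eInd {n : ℕ} (I : Finset (Fin n)) : Fin n → ℝ := fun i => if i ∈ I then 1 else 0

/-- The minimum of `f` over the finite set `s` is attained at least twice. -/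
def MinTwiceOn {α : Type*} [DecidableEq α] (s : Finset α) (f : α → ℝ) : Prop :=
  ∃ a ∈ s, ∃ b ∈ s, a ≠ b ∧ f a = f b ∧ ∀ c ∈ s, f a ≤ f c

/-- The minimum of the three reals `a`, `b`, `c` is attained at least twice. -/
def ThreeMinTwice (a b c : ℝ) : Prop :=
  (a = b ∧ a ≤ c) ∨ (a = c ∧ a ≤ b) ∨ (b = c ∧ b ≤ a)

/-- `x` is a tropical Plücker vector of rank `d` on `[n]`: for every `S` of size `d-2`
and distinct `i,j,k,l ∉ S`, the minimum of the three pairwise sums is attained twice. -/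
def TropPlucker (n d : ℕ) (x : Finset (Fin n) → ℝ) : Prop :=
  ∀ (S : Finset (Fin n)) (i j k l : Fin n),
    S.card = d - 2 → i ∉ S → j ∉ S → k ∉ S → l ∉ S →
    i ≠ j → i ≠ k → i ≠ l → j ≠ k → j ≠ l → k ≠ l →
    ThreeMinTwice
      (x (S ∪ {i, j}) + x (S ∪ {k, l}))
      (x (S ∪ {i, k}) + x (S ∪ {j, l}))
      (x (S ∪ {i, l}) + x (S ∪ {j, k}))

/-- The linear functional on `ℝⁿ` with covector `a`. -/
def lin {n : ℕ} (a : Fin n → ℝ) (z : Fin n → ℝ) : ℝ := ∑ i, a i * z i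

/-- `[u,v]` is an edge of the polytope with (finite) vertex set `V`: some linear
functional attains its maximum over `V` exactly at `u` and `v`, `u ≠ v`. -/
def IsEdge {n : ℕ} (V : Set (Fin n → ℝ)) (u v : Fin n → ℝ) : Prop :=
  u ∈ V ∧ v ∈ V ∧ u ≠ v ∧
  ∃ a : Fin n → ℝ, (∀ z ∈ V, lin a z ≤ lin a u) ∧ lin a u = lin a v ∧
    ∀ z ∈ V, lin a z = lin a u → z = u ∨ z = v

/-- `[u,v]` is a 1-cell of the regular subdivision of the polytope with vertex set `V`
induced by the weights `w`: some affine functional `z ↦ lin a z + c` is dominated by `w`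
on `V` and touches `w` exactly at `u` and `v`, `u ≠ v`. -/
def IsCellEdge {n : ℕ} (V : Set (Fin n → ℝ)) (w : (Fin n → ℝ) → ℝ)
    (u v : Fin n → ℝ) : Prop :=
  u ∈ V ∧ v ∈ V ∧ u ≠ v ∧
  ∃ (a : Fin n → ℝ) (c : ℝ), (∀ z ∈ V, lin a z + c ≤ w z) ∧
    lin a u + c = w u ∧ lin a v + c = w v ∧
    ∀ z ∈ V, lin a z + c = w z → z = u ∨ z = v

/-- The vertex set of `Δ(p,q;n)`: all indicator vectors `e_K` with `|K| ∈ {p,q}`. -/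
def DeltaVerts (n p q : ℕ) : Set (Fin n → ℝ) :=
  {v | ∃ K : Finset (Fin n), (K.card = p ∨ K.card = q) ∧ v = eInd K}

/-- The vertex set of the face `Δ_{S,T}`: the vectors `e_{S∪{i}}` and `e_{T∖{i}}`
for `i ∈ T∖S`. -/
def DeltaSTVerts {n : ℕ} (S T : Finset (Fin n)) : Set (Fin n → ℝ) :=
  {v | ∃ i ∈ T \ S, v = eInd (insert i S) ∨ v = eInd (T.erase i)}

/-- The vertex set of the cross-polytope `P_n`: `{±e_i : i ∈ [n]}`. -/
def CrossVerts (n : ℕ) : Set (Fin n → ℝ) :=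
  {v | ∃ i : Fin n, v = eInd {i} ∨ v = -(eInd {i})}

/-- `M'` is a quotient of `M` (the matroids are concordant):
every flat of `M'` is a flat of `M`. -/
def MatroidQuotient {α : Type*} (M' M : Matroid α) : Prop :=
  ∀ F : Set α, M'.IsFlat F → M.IsFlat F

/-!
Let `z ↦ lin a z + c` be the affine function cutting out the cell `[e_I, e_J]`: it lies below
`x` on all `d`-sets and touches it exactly at `I` and `J`. The three-term Plücker relations
imply the valuated exchange property: for `i ∈ I ∖ J` there is `j ∈ J ∖ I` with
`x (I - i + j) + x (J - j + i) ≤ x I + x J`. As `lin a` is modular, the affine function takes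
the same total value on the exchanged pair, so it touches `x` at `I - i + j`, which must
therefore be `J`; hence `I ∖ J = {i}`.
-/

theorem ThreeMinTwice.min_le {a b c : ℝ} (h : ThreeMinTwice a b c) : min a c ≤ b := by
  rcases h with ⟨rfl, -⟩ | ⟨rfl, h⟩ | ⟨rfl, h⟩
  · exact min_le_left _ _
  · exact min_le_of_left_le h
  · exact min_le_of_right_le le_rfl

theorem lin_eInd {n : ℕ} (a : Fin n → ℝ) (K : Finset (Fin n)) :
    lin a (eInd K) = ∑ p ∈ K, a p := by
  simp [lin, eInd, mul_ite]

theorem eInd_injective {n : ℕ} : Function.Injective (eInd (n := n)) := by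
  intro K L h
  ext t
  have := congrFun h t
  by_cases hK : t ∈ K <;> by_cases hL : t ∈ L <;> simp_all [eInd]

namespace Finset

variable {α : Type*} [DecidableEq α]

theorem sum_insert_erase {M : Type*} [AddCommGroup M] (f : α → M) {A : Finset α} {i j : α}
    (hi : i ∈ A) (hj : j ∉ A) :
    ∑ p ∈ insert j (A.erase i), f p = ∑ p ∈ A, f p - f i + f j := by
  rw [sum_insert (fun h => hj (mem_of_mem_erase h)), ← add_sum_erase A f hi]
  abel

theorem card_insert_erase {A : Finset α} {i j : α} (hi : i ∈ A) (hj : j ∉ A) :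
    #(insert j (A.erase i)) = #A := by
  rw [card_insert_of_notMem (fun h => hj (mem_of_mem_erase h)), card_erase_add_one hi]

theorem insert_erase_eq_of_sdiff_eq_singleton {A B : Finset α} {i j : α}
    (hAB : A \ B = {i}) (hBA : B \ A = {j}) : insert j (A.erase i) = B := by
  ext t
  have hi := congrArg (t ∈ ·) hAB
  have hj := congrArg (t ∈ ·) hBA
  simp only [mem_sdiff, mem_singleton, eq_iff_iff] at hi hj
  simp only [mem_insert, mem_erase]
  grind

theorem sdiff_insert_erase {A : Finset α} {i j : α} (hi : i ∈ A) (hj : j ∉ A) :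
    A \ insert j (A.erase i) = {i} := by
  ext t
  simp only [mem_sdiff, mem_insert, mem_erase, mem_singleton]
  grind

end Finset

/-- The three-term relation at `S = A ∖ {i, k}`, written through exchanges in `A`. -/
theorem TropPlucker.min_le {n d : ℕ} {y : Finset (Fin n) → ℝ} (hy : TropPlucker n d y)
    {A : Finset (Fin n)} (hA : #A = d) {i j k l : Fin n} (hi : i ∈ A) (hk : k ∈ A)
    (hik : i ≠ k) (hj : j ∉ A) (hl : l ∉ A) (hjl : j ≠ l) :
    min (y (insert j (A.erase k)) + y (insert l (A.erase i)))
        (y (insert l (A.erase k)) + y (insert j (A.erase i)))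
      ≤ y A + y (insert j ((insert l (A.erase k)).erase i)) := by
  set S := (A.erase i).erase k
  have hS : #S = d - 2 := by
    rw [card_erase_of_mem (mem_erase.2 ⟨hik.symm, hk⟩), card_erase_of_mem hi, hA]; rfl
  have hrel := hy S i j k l hS (by simp [S]) (by simp [S, hj]) (by simp [S]) (by simp [S, hl])
    (by rintro rfl; exact hj hi) hik (by rintro rfl; exact hl hi)
    (by rintro rfl; exact hj hk) hjl (by rintro rfl; exact hl hk)
  convert hrel.min_le using 4 <;> ext t <;>
    simp only [S, mem_union, mem_insert, mem_erase, mem_singleton] <;> grind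

/-- The valuated exchange property, by induction on `#(A ∖ B)`. For the inductive step
exchange some `k ≠ i` of `A ∖ B` against the best `l ∈ B ∖ A`, apply induction to the
resulting `A'` and combine with the three-term relation at `A ∖ {i, k}`. -/
theorem TropPlucker.exchange {n d : ℕ} {y : Finset (Fin n) → ℝ} (hy : TropPlucker n d y)
    {A B : Finset (Fin n)} (hA : #A = d) (hB : #B = d) {i : Fin n} (hi : i ∈ A \ B) :
    ∃ j ∈ B \ A, y (insert j (A.erase i)) + y (insert i (B.erase j)) ≤ y A + y B := by
  induction hm : #(A \ B) using Nat.strong_induction_on generalizing A i with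
  | _ m ih =>
  have hBA : #(B \ A) = m := by rw [← hm, card_sdiff_comm (hB.trans hA.symm)]
  obtain ⟨hiA, hiB⟩ := mem_sdiff.1 hi
  by_cases hm1 : m = 1
  · obtain ⟨j, hj⟩ := card_eq_one.1 (hBA.trans hm1)
    have hAB : A \ B = {i} := by
      obtain ⟨i', hi'⟩ := card_eq_one.1 (hm.trans hm1)
      rw [hi'] at hi ⊢
      rw [mem_singleton.1 hi]
    refine ⟨j, hj ▸ mem_singleton_self j, ?_⟩
    rw [insert_erase_eq_of_sdiff_eq_singleton hAB hj,
      insert_erase_eq_of_sdiff_eq_singleton hj hAB, add_comm]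
  have hm2 : 2 ≤ m := by
    have := hm ▸ card_pos.2 ⟨i, hi⟩
    omega
  obtain ⟨k, hk⟩ : ((A \ B).erase i).Nonempty := by
    rw [← card_pos, card_erase_of_mem hi, hm]; omega
  obtain ⟨hki, hkAB⟩ := mem_erase.1 hk
  obtain ⟨hkA, hkB⟩ := mem_sdiff.1 hkAB
  obtain ⟨l, hlBA, hl_min⟩ := (B \ A).exists_min_image
    (fun t => y (insert t (A.erase k)) + y (insert i (B.erase t)))
    (card_pos.1 (by omega))
  obtain ⟨hlB, hlA⟩ := mem_sdiff.1 hlBA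
  set A' := insert l (A.erase k)
  have hA'B : A' \ B = (A \ B).erase k := by
    ext t; simp only [A', mem_sdiff, mem_insert, mem_erase]; grind
  obtain ⟨j, hjBA', hj_ih⟩ := ih (m - 1) (by omega) ((card_insert_erase hkA hlA).trans hA)
    (hA'B ▸ mem_erase.2 ⟨hki.symm, hi⟩) (by rw [hA'B, card_erase_of_mem hkAB, hm])
  have hjBA : j ∈ B \ A := by simp only [mem_sdiff, mem_insert, mem_erase] at hjBA' ⊢; grind
  have hjl : j ≠ l := by rintro rfl; simp at hjBA'
  have hrel := hy.min_le hA hiA hkA hki.symm (mem_sdiff.1 hjBA).2 hlA hjl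
  rcases min_le_iff.1 hrel with h | h
  · exact ⟨l, hlBA, by linarith [hl_min j hjBA]⟩
  · exact ⟨j, hjBA, by linarith⟩

theorem statement19_general (n d : ℕ)
    (x : Finset (Fin n) → ℝ) (hx : TropPlucker n d x)
    (W : (Fin n → ℝ) → ℝ)
    (hW : ∀ I : Finset (Fin n), I.card = d → W (eInd I) = x I) :
    ∀ I J : Finset (Fin n), I.card = d → J.card = d →
      IsCellEdge {v : Fin n → ℝ | ∃ K : Finset (Fin n), K.card = d ∧ v = eInd K}
        W (eInd I) (eInd J) →
      (I \ J).card = 1 := by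
  rintro I J hI hJ ⟨-, -, hIJ, a, c, h_le, h_eqI, h_eqJ, h_eq⟩
  obtain ⟨i, hi⟩ : (I \ J).Nonempty := sdiff_nonempty.2 fun hsub =>
    hIJ (congrArg eInd (eq_of_subset_of_card_le hsub (hJ.trans hI.symm).le))
  obtain ⟨hiI, hiJ⟩ := mem_sdiff.1 hi
  obtain ⟨j, hj, h_exch⟩ := hx.exchange hI hJ hi
  obtain ⟨hjJ, hjI⟩ := mem_sdiff.1 hj
  set K := insert j (I.erase i)
  set L := insert i (J.erase j)
  have hK : #K = d := (card_insert_erase hiI hjI).trans hI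
  have hL : #L = d := (card_insert_erase hjJ hiJ).trans hJ
  have h_mod : lin a (eInd K) + lin a (eInd L) = lin a (eInd I) + lin a (eInd J) := by
    simp only [K, L, lin_eInd, sum_insert_erase a hiI hjI, sum_insert_erase a hjJ hiJ]
    ring
  -- `x K + x L ≤ x I + x J` is the affine function's value on `K, L`, which lies below `x`.
  have h_touch : lin a (eInd K) + c = W (eInd K) := by
    have hK_le := h_le _ ⟨K, hK, rfl⟩
    have hL_le := h_le _ ⟨L, hL, rfl⟩
    rw [hW I hI] at h_eqI
    rw [hW J hJ] at h_eqJ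
    rw [hW K hK] at hK_le ⊢
    rw [hW L hL] at hL_le
    linarith
  rcases h_eq _ ⟨K, hK, rfl⟩ h_touch with h | h
  · exact absurd (eInd_injective h ▸ mem_insert_self j _) hjI
  · rw [← eInd_injective h, sdiff_insert_erase hiI hjI, card_singleton]

/-- if `x` is a tropical Plücker vector of rank `d` on `[n]`, then every
edge `[e_I, e_J]` of the regular subdivision of the hypersimplex `Δ(d,n)` induced by
lifting `e_I` to `x_I` is an edge of `Δ(d,n)`, i.e. satisfies `|I∖J| = 1`. -/
theorem statement19 (n d : ℕ) (hd : 2 ≤ d) (hdn : d ≤ n)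
    (x : Finset (Fin n) → ℝ) (hx : TropPlucker n d x)
    (W : (Fin n → ℝ) → ℝ)
    (hW : ∀ I : Finset (Fin n), I.card = d → W (eInd I) = x I) :
    ∀ I J : Finset (Fin n), I.card = d → J.card = d →
      IsCellEdge {v : Fin n → ℝ | ∃ K : Finset (Fin n), K.card = d ∧ v = eInd K}
        W (eInd I) (eInd J) →
      (I \ J).card = 1 :=
  statement19_general n d x hx W hW
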